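/- For a positive definite density matrix ρ and unit vector φ, Δ_max(ρ, |φ⟩⟨φ|) = 1 − (⟨φ|ρ^{-1}|φ⟩)^{-1} = 1 − F(ρ,|φ⟩⟨φ|)², where Δ_max is the minimal total variation distance over reverse tests and F is the Uhlmann fidelity. -/

import Mathlib

open Matrix BigOperators
open scoped ComplexOrder Classical

noncomputable def msqrt {n : Type*} [Fintype n] [DecidableEq n]
    (A : Matrix n n ℂ) : Matrix n n ℂ :=
  if h : A.PosSemidef then
    (h.1.eigenvectorUnitary : Matrix n n ℂ) *
      diagonal ((↑) ∘ (Real.sqrt ·) ∘ h.1.eigenvalues) *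
      (star h.1.eigenvectorUnitary : Matrix n n ℂ) else 0

noncomputable def gm {n : Type*} [Fintype n] [DecidableEq n]
    (A B : Matrix n n ℂ) : Matrix n n ℂ :=
  msqrt A * msqrt ((msqrt A)⁻¹ * B * (msqrt A)⁻¹) * msqrt A

def IsDensity {n : Type*} [Fintype n] (ρ : Matrix n n ℂ) : Prop :=
  ρ.PosSemidef ∧ ρ.trace = 1

structure IsReverseTest {d m : ℕ} (ρ σ : Matrix (Fin d) (Fin d) ℂ)
    (R : Fin m → Matrix (Fin d) (Fin d) ℂ) (p q : Fin m → ℝ) : Prop where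
  states : ∀ x, IsDensity (R x)
  p_nonneg : ∀ x, 0 ≤ p x
  q_nonneg : ∀ x, 0 ≤ q x
  p_sum : ∑ x, p x = 1
  q_sum : ∑ x, q x = 1
  rho_eq : ∑ x, (p x : ℂ) • R x = ρ
  sigma_eq : ∑ x, (q x : ℂ) • R x = σ

noncomputable def Fmin {d : ℕ} (ρ σ : Matrix (Fin d) (Fin d) ℂ) : ℝ :=
  sSup {r : ℝ | ∃ (m : ℕ) (R : Fin m → Matrix (Fin d) (Fin d) ℂ) (p q : Fin m → ℝ),
    IsReverseTest ρ σ R p q ∧ r = ∑ x, Real.sqrt (p x * q x)}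

noncomputable def Dmax {d : ℕ} (ρ σ : Matrix (Fin d) (Fin d) ℂ) : ℝ :=
  sInf {r : ℝ | ∃ (m : ℕ) (R : Fin m → Matrix (Fin d) (Fin d) ℂ) (p q : Fin m → ℝ),
    IsReverseTest ρ σ R p q ∧ r = (∑ x, |p x - q x|) / 2}

noncomputable def choiMatrix {d e : ℕ}
    (Λ : Matrix (Fin d) (Fin d) ℂ →ₗ[ℂ] Matrix (Fin e) (Fin e) ℂ) :
    Matrix (Fin d × Fin e) (Fin d × Fin e) ℂ :=
  Matrix.of fun pr qr => Λ (Matrix.single pr.1 qr.1 1) pr.2 qr.2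

def IsCPTP {d e : ℕ}
    (Λ : Matrix (Fin d) (Fin d) ℂ →ₗ[ℂ] Matrix (Fin e) (Fin e) ℂ) : Prop :=
  (choiMatrix Λ).PosSemidef ∧ ∀ A, (Λ A).trace = A.trace

noncomputable def mcfc {n : Type*} [Fintype n] [DecidableEq n]
    (f : ℝ → ℝ) (A : Matrix n n ℂ) : Matrix n n ℂ :=
  if h : A.IsHermitian then h.cfc f else 0

def IsOperatorMonotoneOnNonneg (f : ℝ → ℝ) : Prop :=
  ∀ (d : ℕ) (A B : Matrix (Fin d) (Fin d) ℂ), A.PosSemidef → B.PosSemidef →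
    (B - A).PosSemidef → (mcfc f B - mcfc f A).PosSemidef

noncomputable def traceNorm {n : Type*} [Fintype n] [DecidableEq n]
    (A : Matrix n n ℂ) : ℝ :=
  ((msqrt (Aᴴ * A)).trace).re

/-! The overlap `A = ∑ₓ min (p x) (q x) • R x` of a reverse test of `(ρ, |φ⟩⟨φ|)` satisfies
`0 ≤ A ≤ ρ` and `A ≤ |φ⟩⟨φ|`, and `tr A = 1 - ½ ∑ₓ |p x - q x|`. Lying below a rank-one
projection, `A` equals `(tr A) |φ⟩⟨φ|`; taking Schur complements of `[[ρ, φ], [φ†, a⁻¹]]` in both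
diagonal blocks shows `a |φ⟩⟨φ| ≤ ρ ↔ a ≤ ⟨φ|ρ⁻¹|φ⟩⁻¹ =: c`, so `tr A ≤ c`. Conversely
`ρ = c |φ⟩⟨φ| + (1 - c) τ` for a state `τ`, and the two-outcome test with states `(|φ⟩⟨φ|, τ)`,
`p = (c, 1 - c)`, `q = (1, 0)` attains `1 - c`. -/

namespace Matrix

variable {n : Type*}

theorem posSemidef_sum_smul_sub_sum_smul {ι : Type*} [Fintype ι] {R : ι → Matrix n n ℂ}
    (hR : ∀ x, (R x).PosSemidef) {a b : ι → ℝ} (hab : ∀ x, a x ≤ b x) :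
    (∑ x, (b x : ℂ) • R x - ∑ x, (a x : ℂ) • R x).PosSemidef := by
  rw [← Finset.sum_sub_distrib]
  refine posSemidef_sum _ fun x _ => ?_
  rw [← sub_smul, ← Complex.ofReal_sub]
  exact (hR x).smul (Complex.zero_le_real.mpr (sub_nonneg.mpr (hab x)))

variable [Fintype n]

theorem PosSemidef.exists_isDensity_eq_trace_smul {M τ₀ : Matrix n n ℂ} (hM : M.PosSemidef)
    (hτ₀ : IsDensity τ₀) : ∃ τ, IsDensity τ ∧ M = M.trace • τ := by
  by_cases h : M.trace = 0
  · exact ⟨τ₀, hτ₀, by rw [h, zero_smul]; exact hM.trace_eq_zero_iff.mp h⟩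
  · refine ⟨M.trace⁻¹ • M, ⟨hM.smul (inv_nonneg.mpr hM.trace_nonneg), ?_⟩, ?_⟩
    · rw [trace_smul, smul_eq_mul, inv_mul_cancel₀ h]
    · rw [smul_smul, mul_inv_cancel₀ h, one_smul]

theorem trace_sum_smul_of_isDensity {ι : Type*} [Fintype ι] {R : ι → Matrix n n ℂ}
    (hR : ∀ x, IsDensity (R x)) (a : ι → ℝ) :
    (∑ x, (a x : ℂ) • R x).trace = ((∑ x, a x : ℝ) : ℂ) := by
  simp [trace_sum, trace_smul, (hR _).2]

theorem PosSemidef.eq_trace_smul_vecMulVec {φ : n → ℂ} (hφ : star φ ⬝ᵥ φ = 1)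
    {A : Matrix n n ℂ} (hA : A.PosSemidef) (hPA : (vecMulVec φ (star φ) - A).PosSemidef) :
    A = A.trace • vecMulVec φ (star φ) := by
  set P := vecMulVec φ (star φ)
  have hPv : ∀ v, P *ᵥ v = (star φ ⬝ᵥ v) • φ := fun v => by
    simp [P, vecMulVec_mulVec, op_smul_eq_smul]
  have hker : ∀ v, star φ ⬝ᵥ v = 0 → A *ᵥ v = 0 := by
    intro v hv
    refine (hA.dotProduct_mulVec_zero_iff v).mp (le_antisymm ?_ (hA.dotProduct_mulVec_nonneg v))
    simpa [sub_mulVec, hPv, hv] using hPA.dotProduct_mulVec_nonneg v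
  have hAP : A * P = A := ext_iff_mulVec.mpr fun v => by
    rw [← mulVec_mulVec, hPv, ← sub_eq_zero, ← mulVec_sub]
    exact hker _ (by rw [dotProduct_sub, dotProduct_smul, hφ, smul_eq_mul, mul_one, sub_self])
  have hPA' : P * A = A := by
    have := congrArg (fun M => Mᴴ) hAP
    simpa [P, conjTranspose_mul, conjTranspose_vecMulVec, hA.1.eq] using this
  set a := star φ ⬝ᵥ A *ᵥ φ
  have hA_eq : A = a • P := calc
    A = P * A * P := by rw [hPA', hAP]
    _ = a • P := by rw [mul_vecMulVec, ← mulVec_mulVec, hPv, smul_vecMulVec]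
  have htr : A.trace = a := by
    rw [hA_eq, trace_smul, trace_vecMulVec, dotProduct_comm, hφ, smul_eq_mul, mul_one]
  rwa [htr]

variable [DecidableEq n]

theorem PosDef.re_star_dotProduct_inv_mulVec_pos {ρ : Matrix n n ℂ} (hρ : ρ.PosDef)
    {φ : n → ℂ} (hφ : φ ≠ 0) : 0 < (star φ ⬝ᵥ ρ⁻¹ *ᵥ φ).re :=
  (Complex.pos_iff.mp (hρ.inv.dotProduct_mulVec_pos hφ)).1

theorem PosDef.posSemidef_sub_smul_vecMulVec_iff {ρ : Matrix n n ℂ} (hρ : ρ.PosDef) (φ : n → ℂ)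
    {t : ℝ} (ht : 0 < t) :
    (ρ - (t : ℂ) • vecMulVec φ (star φ)).PosSemidef ↔ star φ ⬝ᵥ ρ⁻¹ *ᵥ φ ≤ ((t⁻¹ : ℝ) : ℂ) := by
  let B : Matrix n Unit ℂ := replicateCol Unit φ
  let D : Matrix Unit Unit ℂ := diagonal fun _ => ((t⁻¹ : ℝ) : ℂ)
  have hD : D.PosDef := posDef_diagonal_iff.mpr fun _ => by exact_mod_cast inv_pos.mpr ht
  have := hρ.isUnit.invertible
  have := hD.isUnit.invertible
  have hBDB : B * D⁻¹ * Bᴴ = (t : ℂ) • vecMulVec φ (star φ) := by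
    ext i j
    simp [B, D, mul_apply, vecMulVec_apply]
    ring
  have hBρB : D - Bᴴ * ρ⁻¹ * B = diagonal fun _ => ((t⁻¹ : ℝ) : ℂ) - star φ ⬝ᵥ ρ⁻¹ *ᵥ φ := by
    ext i j
    simp [B, D, mul_apply, dotProduct, mulVec, Finset.mul_sum, Finset.sum_mul, mul_assoc]
    exact Finset.sum_comm
  rw [← hBDB, ← hD.fromBlocks₂₂, hρ.fromBlocks₁₁, hBρB, posSemidef_diagonal_iff]
  simp [sub_nonneg]

theorem PosDef.posSemidef_sub_smul_vecMulVec_iff_le {ρ : Matrix n n ℂ} (hρ : ρ.PosDef)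
    {φ : n → ℂ} (hφ : φ ≠ 0) {t : ℝ} (ht : 0 < t) :
    (ρ - (t : ℂ) • vecMulVec φ (star φ)).PosSemidef ↔ t ≤ (star φ ⬝ᵥ ρ⁻¹ *ᵥ φ).re⁻¹ := by
  have hs := hρ.inv.dotProduct_mulVec_pos hφ
  rw [hρ.posSemidef_sub_smul_vecMulVec_iff φ ht, Complex.eq_re_of_ofReal_le hs.le,
    Complex.real_le_real, Complex.ofReal_re,
    le_inv_comm₀ (hρ.re_star_dotProduct_inv_mulVec_pos hφ) ht]

end Matrix

open Matrix

theorem Finset.sum_abs_sub_eq_sub_two_mul_sum_min {ι : Type*} (s : Finset ι) (p q : ι → ℝ) :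
    ∑ x ∈ s, |p x - q x| = ∑ x ∈ s, p x + ∑ x ∈ s, q x - 2 * ∑ x ∈ s, min (p x) (q x) := by
  have h : ∀ x, |p x - q x| = p x + q x - 2 * min (p x) (q x) := fun x => by
    linarith [max_sub_min_eq_abs' (p x) (q x), min_add_max (p x) (q x)]
  simp only [h, Finset.sum_sub_distrib, Finset.sum_add_distrib, Finset.mul_sum]

theorem IsReverseTest.one_sub_inv_re_le {d m : ℕ} {ρ : Matrix (Fin d) (Fin d) ℂ} (hρ : ρ.PosDef)
    {φ : Fin d → ℂ} (hφ : star φ ⬝ᵥ φ = 1) {R : Fin m → Matrix (Fin d) (Fin d) ℂ}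
    {p q : Fin m → ℝ} (hT : IsReverseTest ρ (vecMulVec φ (star φ)) R p q) :
    1 - ((star φ ⬝ᵥ ρ⁻¹ *ᵥ φ).re)⁻¹ ≤ (∑ x, |p x - q x|) / 2 := by
  have hφ0 : φ ≠ 0 := by rintro rfl; simp at hφ
  have hR x := (hT.states x).1
  set t := fun x => min (p x) (q x)
  have ht x : 0 ≤ t x := le_min (hT.p_nonneg x) (hT.q_nonneg x)
  set A := ∑ x, (t x : ℂ) • R x
  have hA : A.PosSemidef := by simpa [A] using posSemidef_sum_smul_sub_sum_smul hR (a := 0) ht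
  have hρA : (ρ - A).PosSemidef :=
    hT.rho_eq ▸ posSemidef_sum_smul_sub_sum_smul hR fun x => min_le_left _ _
  have hPA : (vecMulVec φ (star φ) - A).PosSemidef :=
    hT.sigma_eq ▸ posSemidef_sum_smul_sub_sum_smul hR fun x => min_le_right _ _
  rw [hA.eq_trace_smul_vecMulVec hφ hPA, trace_sum_smul_of_isDensity hT.states] at hρA
  have hsum : ∑ x, t x ≤ ((star φ ⬝ᵥ ρ⁻¹ *ᵥ φ).re)⁻¹ := by
    rcases (Finset.sum_nonneg fun x _ => ht x).eq_or_lt with h0 | hpos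
    · rw [← h0]
      exact (inv_pos.mpr (hρ.re_star_dotProduct_inv_mulVec_pos hφ0)).le
    · exact (hρ.posSemidef_sub_smul_vecMulVec_iff_le hφ0 hpos).mp hρA
  rw [Finset.sum_abs_sub_eq_sub_two_mul_sum_min, hT.p_sum, hT.q_sum]
  linarith

theorem exists_isReverseTest_of_posSemidef_sub_smul {d : ℕ} {ρ σ : Matrix (Fin d) (Fin d) ℂ}
    (hρ : IsDensity ρ) (hσ : IsDensity σ) {c : ℝ} (hc : 0 ≤ c)
    (h : (ρ - (c : ℂ) • σ).PosSemidef) :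
    ∃ (R : Fin 2 → Matrix (Fin d) (Fin d) ℂ) (p q : Fin 2 → ℝ),
      IsReverseTest ρ σ R p q ∧ 1 - c = (∑ x, |p x - q x|) / 2 := by
  have htr : (ρ - (c : ℂ) • σ).trace = ((1 - c : ℝ) : ℂ) := by
    rw [trace_sub, trace_smul, hρ.2, hσ.2, smul_eq_mul, mul_one, Complex.ofReal_sub,
      Complex.ofReal_one]
  have hc1 : c ≤ 1 := by
    have := h.trace_nonneg
    rw [htr, Complex.zero_le_real] at this
    linarith
  obtain ⟨τ, hτ, hτ_eq⟩ := h.exists_isDensity_eq_trace_smul hσ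
  rw [htr] at hτ_eq
  refine ⟨![σ, τ], ![c, 1 - c], ![1, 0], ⟨Fin.forall_fin_two.mpr ⟨hσ, hτ⟩,
    Fin.forall_fin_two.mpr ⟨hc, sub_nonneg.mpr hc1⟩, Fin.forall_fin_two.mpr ⟨zero_le_one, le_rfl⟩,
    by simp, by simp, ?_, by simp⟩, ?_⟩
  · simp only [Fin.sum_univ_two, cons_val_zero, cons_val_one]
    rw [← hτ_eq, add_sub_cancel]
  · simp only [Fin.sum_univ_two, cons_val_zero, cons_val_one]
    rw [abs_of_nonpos (by linarith), abs_of_nonneg (by linarith)]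
    ring

theorem Dmax_eq_of_isLeast {d : ℕ} {ρ σ : Matrix (Fin d) (Fin d) ℂ} {v : ℝ}
    (hv : ∃ (m : ℕ) (R : Fin m → Matrix (Fin d) (Fin d) ℂ) (p q : Fin m → ℝ),
      IsReverseTest ρ σ R p q ∧ v = (∑ x, |p x - q x|) / 2)
    (hle : ∀ (m : ℕ) (R : Fin m → Matrix (Fin d) (Fin d) ℂ) (p q : Fin m → ℝ),
      IsReverseTest ρ σ R p q → v ≤ (∑ x, |p x - q x|) / 2) :
    Dmax ρ σ = v :=
  IsLeast.csInf_eq ⟨hv, by rintro _ ⟨m, R, p, q, hT, rfl⟩; exact hle m R p q hT⟩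

theorem stmt17 {d : ℕ} (ρ : Matrix (Fin d) (Fin d) ℂ)
    (hρ : ρ.PosDef) (hρ1 : ρ.trace = 1)
    (φ : Fin d → ℂ) (hφ : star φ ⬝ᵥ φ = 1) :
    Dmax ρ (Matrix.vecMulVec φ (star φ)) = 1 - ((star φ ⬝ᵥ ρ⁻¹ *ᵥ φ).re)⁻¹ := by
  have hφ0 : φ ≠ 0 := by rintro rfl; simp at hφ
  have hc : 0 < ((star φ ⬝ᵥ ρ⁻¹ *ᵥ φ).re)⁻¹ :=
    inv_pos.mpr (hρ.re_star_dotProduct_inv_mulVec_pos hφ0)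
  have hP : IsDensity (vecMulVec φ (star φ)) :=
    ⟨posSemidef_vecMulVec_self_star φ, by rw [trace_vecMulVec, dotProduct_comm, hφ]⟩
  obtain ⟨R, p, q, hT, hv⟩ := exists_isReverseTest_of_posSemidef_sub_smul ⟨hρ.posSemidef, hρ1⟩ hP
    hc.le ((hρ.posSemidef_sub_smul_vecMulVec_iff_le hφ0 hc).mpr le_rfl)
  exact Dmax_eq_of_isLeast ⟨2, R, p, q, hT, hv⟩ fun _ _ _ _ hT => hT.one_sub_inv_re_le hρ hφ
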